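/- arXiv:1502.03636 — 2 statements merged into one kernel-verified Lean document; each statement's English description precedes it below -/
import Mathlib

section
/- Let a_i ∈ Act for each i < n. If □_{i<n} a_i.p_i is injective in prefixes (the a_i are pairwise distinct), then (□_{i<n} a_i.p_i) ∧ (□_{i<n} a_i.q_i) ⊑_RS □_{i<n} a_i.(p_i ∧ q_i). -/
open Classical

/-- Visible actions plus the invisible action τ. -/
inductive ActT (Act : Type) : Type where
  | act : Act → ActT Act
  | tau : ActT Act

/-- Processes of the recursion-free calculus CLL. -/
inductive Proc (Act : Type) : Type where
  | nil  : Proc Act                                -- 0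
  | bot  : Proc Act                                -- ⊥
  | pre  : ActT Act → Proc Act → Proc Act          -- α.t
  | ec   : Proc Act → Proc Act → Proc Act          -- t □ t
  | conj : Proc Act → Proc Act → Proc Act          -- t ∧ t
  | disj : Proc Act → Proc Act → Proc Act          -- t ∨ t
  | par  : Set Act → Proc Act → Proc Act → Proc Act -- t ∥_A t

namespace Proc

variable {Act : Type}

/-- Whether a process has a τ-transition (structural stratification used for
the negative premises of the SOS rules). -/
def hasTau : Proc Act → Prop
  | nil => False
  | bot => False
  | pre a _ => a = ActT.tau
  | ec t₁ t₂ => hasTau t₁ ∨ hasTau t₂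
  | conj t₁ t₂ => hasTau t₁ ∨ hasTau t₂
  | disj _ _ => True
  | par _ t₁ t₂ => hasTau t₁ ∨ hasTau t₂

/-- The transition relation, given by the SOS rules of CLL_R. -/
inductive Trans : Proc Act → ActT Act → Proc Act → Prop where
  | pre : Trans (pre α t) α t
  | ecL : Trans t₁ (ActT.act a) t₁' → ¬ hasTau t₂ →
      Trans (ec t₁ t₂) (ActT.act a) t₁'
  | ecR : ¬ hasTau t₁ → Trans t₂ (ActT.act a) t₂' →
      Trans (ec t₁ t₂) (ActT.act a) t₂'
  | ecTauL : Trans t₁ ActT.tau t₁' → Trans (ec t₁ t₂) ActT.tau (ec t₁' t₂)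
  | ecTauR : Trans t₂ ActT.tau t₂' → Trans (ec t₁ t₂) ActT.tau (ec t₁ t₂')
  | conjAct : Trans t₁ (ActT.act a) t₁' → Trans t₂ (ActT.act a) t₂' →
      Trans (conj t₁ t₂) (ActT.act a) (conj t₁' t₂')
  | conjTauL : Trans t₁ ActT.tau t₁' → Trans (conj t₁ t₂) ActT.tau (conj t₁' t₂)
  | conjTauR : Trans t₂ ActT.tau t₂' → Trans (conj t₁ t₂) ActT.tau (conj t₁ t₂')
  | disjL : Trans (disj t₁ t₂) ActT.tau t₁
  | disjR : Trans (disj t₁ t₂) ActT.tau t₂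
  | parTauL : Trans t₁ ActT.tau t₁' → Trans (par A t₁ t₂) ActT.tau (par A t₁' t₂)
  | parTauR : Trans t₂ ActT.tau t₂' → Trans (par A t₁ t₂) ActT.tau (par A t₁ t₂')
  | parL : a ∉ A → Trans t₁ (ActT.act a) t₁' → ¬ hasTau t₂ →
      Trans (par A t₁ t₂) (ActT.act a) (par A t₁' t₂)
  | parR : a ∉ A → ¬ hasTau t₁ → Trans t₂ (ActT.act a) t₂' →
      Trans (par A t₁ t₂) (ActT.act a) (par A t₁ t₂')
  | parSync : a ∈ A → Trans t₁ (ActT.act a) t₁' → Trans t₂ (ActT.act a) t₂' →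
      Trans (par A t₁ t₂) (ActT.act a) (par A t₁' t₂')

/-- The ready set I(p). -/
def ready (p : Proc Act) : Set (ActT Act) := {α | ∃ q, Trans p α q}

/-- p is stable if it has no τ-transition. -/
def Stable (p : Proc Act) : Prop := ∀ q, ¬ Trans p ActT.tau q

/-- The inconsistency predicate F, as the least predicate closed under the
predicative rules of CLL_R. -/
inductive Fp : Proc Act → Prop where
  | bot : Fp bot
  | pre : Fp t → Fp (pre α t)
  | disj : Fp t₁ → Fp t₂ → Fp (disj t₁ t₂)
  | ecL : Fp t₁ → Fp (ec t₁ t₂)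
  | ecR : Fp t₂ → Fp (ec t₁ t₂)
  | parL : Fp t₁ → Fp (par A t₁ t₂)
  | parR : Fp t₂ → Fp (par A t₁ t₂)
  | conjL : Fp t₁ → Fp (conj t₁ t₂)
  | conjR : Fp t₂ → Fp (conj t₁ t₂)
  | conjReady : Stable (conj t₁ t₂) → ready t₁ ≠ ready t₂ → Fp (conj t₁ t₂)
  | conjSucc : Trans (conj t₁ t₂) α s → (∀ y, Trans (conj t₁ t₂) α y → Fp y) →
      Fp (conj t₁ t₂)
  | conjStable :
      (∀ y, Relation.ReflTransGen (fun x z => Trans x ActT.tau z) (conj t₁ t₂) y →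
        Stable y → Fp y) →
      Fp (conj t₁ t₂)

/-- One τ-step with both endpoints consistent. -/
def tauStepF (p q : Proc Act) : Prop := Trans p ActT.tau q ∧ ¬ Fp p ∧ ¬ Fp q

/-- p ⇒_F| q : a sequence of τ-transitions from p to q, all states outside F,
with q stable. -/
def epsF (p q : Proc Act) : Prop :=
  Relation.ReflTransGen tauStepF p q ∧ ¬ Fp p ∧ ¬ Fp q ∧ Stable q

/-- p =a⇒_F| q. -/
def wkF (a : Act) (p q : Proc Act) : Prop :=
  ∃ r s, Relation.ReflTransGen tauStepF p r ∧ ¬ Fp p ∧ ¬ Fp r ∧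
    Trans r (ActT.act a) s ∧ ¬ Fp s ∧
    Relation.ReflTransGen tauStepF s q ∧ ¬ Fp q ∧ Stable q

/-- R is a stable ready simulation. -/
def StableRS (R : Proc Act → Proc Act → Prop) : Prop :=
  ∀ p q, R p q →
    Stable p ∧ Stable q ∧
    (¬ Fp p → ¬ Fp q) ∧
    (∀ a p', wkF a p p' → ∃ q', wkF a q q' ∧ R p' q') ∧
    (¬ Fp p → ready p = ready q)

/-- p ⊏̃_RS q. -/
def rsLT (p q : Proc Act) : Prop := ∃ R, StableRS R ∧ R p q

/-- p ⊑_RS q. -/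
def rsLE (p q : Proc Act) : Prop :=
  ∀ p', epsF p p' → ∃ q', epsF q q' ∧ rsLT p' q'

/-- p =_RS q. -/
def rsEq (p q : Proc Act) : Prop := rsLE p q ∧ rsLE q p

/-- Basic process terms T(Σ_B): no ⊥ and no ∧. -/
inductive Basic : Proc Act → Prop where
  | nil : Basic nil
  | pre : Basic t → Basic (pre α t)
  | disj : Basic t₁ → Basic t₂ → Basic (disj t₁ t₂)
  | ec : Basic t₁ → Basic t₂ → Basic (ec t₁ t₂)
  | par : Basic t₁ → Basic t₂ → Basic (par A t₁ t₂)

/-- General external choice □ over a finite sequence (left-nested). -/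
def ecList : List (Proc Act) → Proc Act
  | [] => nil
  | t :: ts => ts.foldl ec t

/-- General disjunction ⋁ over a nonempty finite sequence (left-nested). -/
def djList : List (Proc Act) → Proc Act
  | [] => bot
  | t :: ts => ts.foldl disj t

/-- □_{i<n} a_i.t_i for a sequence of prefixed terms. -/
def ecPre (l : List (Act × Proc Act)) : Proc Act :=
  ecList (l.map fun x => pre (ActT.act x.1) x.2)

/-- The expansion term E = ((□Ω₁) □ (□Ω₂)) □ (□Ω₃). -/
noncomputable def expTerm (A : Set Act) (l₁ l₂ : List (Act × Proc Act)) : Proc Act :=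
  ec (ec
      (ecList ((l₁.filter fun x => decide (x.1 ∉ A)).map
        fun x => pre (ActT.act x.1) (par A x.2 (ecPre l₂))))
      (ecList ((l₂.filter fun x => decide (x.1 ∉ A)).map
        fun x => pre (ActT.act x.1) (par A (ecPre l₁) x.2))))
    (ecList (l₁.flatMap fun x =>
      (l₂.filter fun y => decide (y.1 = x.1 ∧ x.1 ∈ A)).map
        fun y => pre (ActT.act x.1) (par A x.2 y.2)))

/-- Normal forms NF_B. -/
inductive NFB : Proc Act → Prop where
  | mk (ls : List (List (Act × Proc Act))) (hne : ls ≠ [])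
      (hnodup : ∀ l ∈ ls, (l.map Prod.fst).Nodup)
      (hsub : ∀ l ∈ ls, ∀ x ∈ l, NFB x.2) :
      NFB (djList (ls.map ecPre))

/-- NF = NF_B ∪ {⊥}. -/
def NF (p : Proc Act) : Prop := NFB p ∨ p = bot

/-- Derivability ⊢ t ≤ t' in the proof system AX_CLL. -/
inductive Deriv : Proc Act → Proc Act → Prop where
  | refl (t) : Deriv t t
  | trans : Deriv t t' → Deriv t' t'' → Deriv t t''
  | mono_pre : Deriv t t' → Deriv (pre α t) (pre α t')
  | mono_ec : Deriv s s' → Deriv t t' → Deriv (ec s t) (ec s' t')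
  | mono_conj : Deriv s s' → Deriv t t' → Deriv (conj s t) (conj s' t')
  | mono_disj : Deriv s s' → Deriv t t' → Deriv (disj s t) (disj s' t')
  | mono_par : Deriv s s' → Deriv t t' → Deriv (par A s t) (par A s' t')
  -- external choice
  | ec_comm : Deriv (ec x y) (ec y x)
  | ec_assoc₁ : Deriv (ec (ec x y) z) (ec x (ec y z))
  | ec_assoc₂ : Deriv (ec x (ec y z)) (ec (ec x y) z)
  | ec_idem₁ : Deriv (ec x x) x
  | ec_idem₂ : Deriv x (ec x x)
  | ec_nil₁ : Deriv (ec x nil) x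
  | ec_nil₂ : Deriv x (ec x nil)
  | ec_bot₁ : Deriv (ec x bot) bot
  | ec_bot₂ : Deriv bot (ec x bot)
  -- disjunction
  | disj_comm : Deriv (disj x y) (disj y x)
  | disj_assoc₁ : Deriv (disj x (disj y z)) (disj (disj x y) z)
  | disj_assoc₂ : Deriv (disj (disj x y) z) (disj x (disj y z))
  | disj_idem₁ : Deriv (disj x x) x
  | disj_idem₂ : Deriv x (disj x x)
  | disj_bot₁ : Deriv (disj x bot) x
  | disj_bot₂ : Deriv x (disj x bot)
  | disj_le : Deriv x (disj x y)
  -- conjunction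
  | conj_comm : Deriv (conj x y) (conj y x)
  | conj_idem₁ : Deriv (conj x x) x
  | conj_idem₂ : Deriv x (conj x x)
  | conj_bot₁ : Deriv (conj x bot) bot
  | conj_bot₂ : Deriv bot (conj x bot)
  -- prefixing
  | pre_bot₁ : Deriv (pre (ActT.act a) bot) bot
  | pre_bot₂ : Deriv bot (pre (ActT.act a) bot)
  | tau_pre₁ : Deriv (pre ActT.tau x) x
  | tau_pre₂ : Deriv x (pre ActT.tau x)
  -- parallel
  | par_comm : Deriv (par A x y) (par A y x)
  | par_bot₁ : Deriv (par A x bot) bot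
  | par_bot₂ : Deriv bot (par A x bot)
  -- distribution over disjunction
  | ds_ec : Deriv (ec x (disj y z)) (disj (ec x y) (ec x z))
  | ds_conj : Deriv (conj x (disj y z)) (disj (conj x y) (conj x z))
  | ds_par : Deriv (par A x (disj y z)) (disj (par A x y) (par A x z))
  | ds_pre : Basic x → Basic y →
      Deriv (pre (ActT.act a) (disj x y)) (ec (pre (ActT.act a) x) (pre (ActT.act a) y))
  -- external choice and conjunction
  | ecc1₁ (l₁ l₂ : List (Act × Proc Act)) :
      {a | a ∈ l₁.map Prod.fst} ≠ {a | a ∈ l₂.map Prod.fst} →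
      Deriv (conj (ecPre l₁) (ecPre l₂)) bot
  | ecc1₂ (l₁ l₂ : List (Act × Proc Act)) :
      {a | a ∈ l₁.map Prod.fst} ≠ {a | a ∈ l₂.map Prod.fst} →
      Deriv bot (conj (ecPre l₁) (ecPre l₂))
  | ecc2 (l : List (Act × Proc Act × Proc Act)) :
      Deriv (ecPre (l.map fun x => (x.1, conj x.2.1 x.2.2)))
            (conj (ecPre (l.map fun x => (x.1, x.2.1)))
                  (ecPre (l.map fun x => (x.1, x.2.2))))
  | ecc3 (l : List (Act × Proc Act × Proc Act)) :
      (l.map Prod.fst).Nodup →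
      Deriv (conj (ecPre (l.map fun x => (x.1, x.2.1)))
                  (ecPre (l.map fun x => (x.1, x.2.2))))
            (ecPre (l.map fun x => (x.1, conj x.2.1 x.2.2)))
  -- expansion
  | exp1 (A : Set Act) (l₁ l₂ : List (Act × Proc Act)) :
      Deriv (par A (ecPre l₁) (ecPre l₂)) (expTerm A l₁ l₂)
  | exp2 (A : Set Act) (l₁ l₂ : List (Act × Proc Act)) :
      (∀ x ∈ l₁, Basic x.2) → (∀ x ∈ l₂, Basic x.2) →
      Deriv (expTerm A l₁ l₂) (par A (ecPre l₁) (ecPre l₂))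

end Proc

namespace Proc

/-!
Neither side has a τ-transition, and because the prefixes are pairwise distinct the
a-successors of `(□ aᵢ.pᵢ) ∧ (□ aᵢ.qᵢ)` are exactly the a-successors `pᵢ ∧ qᵢ` of
`□ aᵢ.(pᵢ ∧ qᵢ)`: the two processes have the same transitions. A stable process is
`⊑_RS`-below every process with the same transitions that is at most as inconsistent,
witnessed by the stable ready simulation relating the pair and otherwise the identity
on stable processes.
-/

section

variable {Act : Type}

lemma hasTau_of_trans_tau {p q : Proc Act} (h : Trans p ActT.tau q) : hasTau p := by
  generalize hα : (ActT.tau : ActT Act) = α at h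
  induction h <;> simp_all [hasTau]

lemma stable_of_not_hasTau {p : Proc Act} (h : ¬ hasTau p) : Stable p :=
  fun _ ht => h (hasTau_of_trans_tau ht)

lemma eq_of_reflTransGen_tauStepF {p q : Proc Act} (hp : Stable p)
    (h : Relation.ReflTransGen tauStepF p q) : q = p := by
  rcases h.cases_head with h | ⟨c, hc, -⟩
  · exact h.symm
  · exact absurd hc.1 (hp c)

lemma trans_pre_iff {α β : ActT Act} {t u : Proc Act} :
    Trans (pre α t) β u ↔ β = α ∧ u = t := by
  constructor
  · rintro ⟨⟩; exact ⟨rfl, rfl⟩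
  · rintro ⟨rfl, rfl⟩; exact Trans.pre

lemma trans_conj_act_iff {t₁ t₂ u : Proc Act} {a : Act} :
    Trans (conj t₁ t₂) (ActT.act a) u ↔
      ∃ u₁ u₂, Trans t₁ (ActT.act a) u₁ ∧ Trans t₂ (ActT.act a) u₂ ∧ u = conj u₁ u₂ := by
  constructor
  · rintro (_ | _ | _ | _ | _ | ⟨h₁, h₂⟩)
    exact ⟨_, _, h₁, h₂, rfl⟩
  · rintro ⟨u₁, u₂, h₁, h₂, rfl⟩
    exact Trans.conjAct h₁ h₂

lemma not_hasTau_foldl_ec {t : Proc Act} {L : List (Proc Act)}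
    (h : ∀ s ∈ t :: L, ¬ hasTau s) : ¬ hasTau (L.foldl ec t) := by
  induction L generalizing t with
  | nil => exact h t List.mem_cons_self
  | cons s L ih =>
    simp only [List.forall_mem_cons] at h ih ⊢
    exact ih ⟨fun hts => hts.elim h.1 h.2.1, h.2.2⟩

lemma trans_foldl_ec_iff {t u : Proc Act} {L : List (Proc Act)} {a : Act}
    (h : ∀ s ∈ t :: L, ¬ hasTau s) :
    Trans (L.foldl ec t) (ActT.act a) u ↔ ∃ s ∈ t :: L, Trans s (ActT.act a) u := by
  induction L generalizing t with
  | nil => simp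
  | cons s L ih =>
    simp only [List.forall_mem_cons] at h
    have hts : ∀ r ∈ ec t s :: L, ¬ hasTau r :=
      List.forall_mem_cons.2 ⟨fun hts => hts.elim h.1 h.2.1, h.2.2⟩
    have hec : Trans (ec t s) (ActT.act a) u ↔ Trans t (ActT.act a) u ∨ Trans s (ActT.act a) u :=
      ⟨by rintro (_ | ⟨ht, -⟩ | ⟨-, hs⟩) <;> tauto,
        by rintro (ht | hs); exacts [Trans.ecL ht h.2.1, Trans.ecR h.1 hs]⟩
    simp [ih hts, hec, or_assoc]

lemma fp_of_fp_foldl_ec {t : Proc Act} {L : List (Proc Act)} (h : Fp (L.foldl ec t)) :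
    ∃ s ∈ t :: L, Fp s := by
  induction L generalizing t with
  | nil => exact ⟨t, List.mem_cons_self, h⟩
  | cons s L ih =>
    obtain ⟨r, hr, hFr⟩ := ih h
    rcases List.mem_cons.1 hr with rfl | hr
    · rcases hFr with _ | _ | _ | hFt | hFs
      · exact ⟨t, List.mem_cons_self, hFt⟩
      · exact ⟨s, by simp, hFs⟩
    · exact ⟨r, by simp [hr], hFr⟩

lemma not_hasTau_ecList {ts : List (Proc Act)} (h : ∀ s ∈ ts, ¬ hasTau s) :
    ¬ hasTau (ecList ts) := by
  rcases ts with _ | ⟨t, ts⟩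
  · exact id
  · exact not_hasTau_foldl_ec h

lemma trans_ecList_iff {ts : List (Proc Act)} {a : Act} {u : Proc Act}
    (h : ∀ s ∈ ts, ¬ hasTau s) :
    Trans (ecList ts) (ActT.act a) u ↔ ∃ s ∈ ts, Trans s (ActT.act a) u := by
  rcases ts with _ | ⟨t, ts⟩
  · simp only [ecList, List.not_mem_nil, false_and, exists_false, iff_false]
    rintro ⟨⟩
  · exact trans_foldl_ec_iff h

lemma exists_fp_of_fp_ecList {ts : List (Proc Act)} (h : Fp (ecList ts)) : ∃ s ∈ ts, Fp s := by
  rcases ts with _ | ⟨t, ts⟩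
  · cases h
  · exact fp_of_fp_foldl_ec h

lemma forall_not_hasTau_pre_act (l : List (Act × Proc Act)) :
    ∀ s ∈ l.map (fun x => pre (ActT.act x.1) x.2), ¬ hasTau s := by
  simp only [List.forall_mem_map, hasTau, reduceCtorEq, not_false_eq_true, implies_true]

lemma not_hasTau_ecPre (l : List (Act × Proc Act)) : ¬ hasTau (ecPre l) :=
  not_hasTau_ecList (forall_not_hasTau_pre_act l)

lemma stable_ecPre (l : List (Act × Proc Act)) : Stable (ecPre l) :=
  stable_of_not_hasTau (not_hasTau_ecPre l)

lemma trans_ecPre_iff {l : List (Act × Proc Act)} {a : Act} {u : Proc Act} :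
    Trans (ecPre l) (ActT.act a) u ↔ (a, u) ∈ l := by
  rw [ecPre, trans_ecList_iff (forall_not_hasTau_pre_act l)]
  constructor
  · rintro ⟨_, hy', hyu⟩
    obtain ⟨y, hy, rfl⟩ := List.mem_map.1 hy'
    obtain ⟨⟨⟩, rfl⟩ := trans_pre_iff.1 hyu
    exact hy
  · exact fun h => ⟨_, List.mem_map_of_mem h, Trans.pre⟩

lemma exists_fp_of_fp_ecPre {l : List (Act × Proc Act)} (h : Fp (ecPre l)) :
    ∃ x ∈ l, Fp x.2 := by
  obtain ⟨s, hs, hFs⟩ := exists_fp_of_fp_ecList h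
  obtain ⟨y, hy, rfl⟩ := List.mem_map.1 hs
  exact ⟨y, hy, by cases hFs; assumption⟩

lemma eq_of_mem_of_nodup_map_fst {β γ : Type*} {l : List (β × γ)} (hl : (l.map Prod.fst).Nodup)
    {a : β} {u v : γ} (hu : (a, u) ∈ l) (hv : (a, v) ∈ l) : u = v :=
  (Prod.ext_iff.1 (List.inj_on_of_nodup_map hl hu hv rfl)).2

lemma wkF_of_trans_imp {p q p' : Proc Act} {a : Act} (hp : Stable p) (hF : ¬ Fp p → ¬ Fp q)
    (htr : ∀ s, Trans p (ActT.act a) s → Trans q (ActT.act a) s) (h : wkF a p p') :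
    wkF a q p' := by
  obtain ⟨r, s, hpr, hnFp, hnFr, hrs, hnFs, hsp', hnFp', hp'⟩ := h
  obtain rfl := eq_of_reflTransGen_tauStepF hp hpr
  exact ⟨q, s, .refl, hF hnFp, hF hnFp, htr s hrs, hnFs, hsp', hnFp', hp'⟩

lemma stable_of_wkF {a : Act} {p q : Proc Act} (h : wkF a p q) : Stable q := by
  obtain ⟨-, -, -, -, -, -, -, -, -, hq⟩ := h
  exact hq

lemma rsLT_of_wkF_imp {p q : Proc Act} (hp : Stable p) (hq : Stable q)
    (hF : ¬ Fp p → ¬ Fp q) (hready : ready p = ready q)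
    (hwk : ∀ a p', wkF a p p' → wkF a q p') : rsLT p q := by
  refine ⟨fun x y => (x = p ∧ y = q) ∨ (x = y ∧ Stable x), ?_, .inl ⟨rfl, rfl⟩⟩
  rintro x y (⟨rfl, rfl⟩ | ⟨rfl, hx⟩)
  · exact ⟨hp, hq, hF, fun a p' h => ⟨p', hwk a p' h, .inr ⟨rfl, stable_of_wkF h⟩⟩,
      fun _ => hready⟩
  · exact ⟨hx, hx, id, fun a p' h => ⟨p', h, .inr ⟨rfl, stable_of_wkF h⟩⟩, fun _ => rfl⟩

lemma rsLE_of_stable_of_rsLT {p q : Proc Act} (hp : Stable p) (hq : Stable q)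
    (hF : ¬ Fp p → ¬ Fp q) (h : rsLT p q) : rsLE p q := by
  rintro p' ⟨hpp', hnFp, -, -⟩
  obtain rfl := eq_of_reflTransGen_tauStepF hp hpp'
  exact ⟨q, ⟨.refl, hF hnFp, hF hnFp, hq⟩, h⟩

theorem rsLE_of_trans_iff {p q : Proc Act} (hp : Stable p) (hF : Fp q → Fp p)
    (htr : ∀ α s, Trans p α s ↔ Trans q α s) : rsLE p q := by
  have hq : Stable q := fun s hs => hp s ((htr _ s).2 hs)
  have hF' : ¬ Fp p → ¬ Fp q := mt hF
  have hready : ready p = ready q := Set.ext fun α => exists_congr fun s => htr α s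
  exact rsLE_of_stable_of_rsLT hp hq hF' <| rsLT_of_wkF_imp hp hq hF' hready
    fun a _ => wkF_of_trans_imp hp hF' fun s => (htr _ s).1

lemma stable_conj_ecPre (l₁ l₂ : List (Act × Proc Act)) : Stable (conj (ecPre l₁) (ecPre l₂)) :=
  stable_of_not_hasTau fun h => (show hasTau _ ∨ hasTau _ from h).elim
    (not_hasTau_ecPre l₁) (not_hasTau_ecPre l₂)

section Injective

variable {l : List (Act × Proc Act × Proc Act)}

lemma trans_conj_ecPre_iff (hinj : (l.map Prod.fst).Nodup) (α : ActT Act) (s : Proc Act) :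
    Trans (conj (ecPre (l.map fun x => (x.1, x.2.1))) (ecPre (l.map fun x => (x.1, x.2.2))))
        α s ↔ Trans (ecPre (l.map fun x => (x.1, conj x.2.1 x.2.2))) α s := by
  rcases α with a | _
  · simp only [trans_conj_act_iff, trans_ecPre_iff, List.mem_map, Prod.mk.injEq]
    constructor
    · rintro ⟨u₁, u₂, ⟨x, hx, rfl, rfl⟩, ⟨y, hy, hya, rfl⟩, rfl⟩
      obtain rfl : x = y := List.inj_on_of_nodup_map hinj hx hy hya.symm
      exact ⟨x, hx, rfl, rfl⟩
    · rintro ⟨x, hx, rfl, rfl⟩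
      exact ⟨_, _, ⟨x, hx, rfl, rfl⟩, ⟨x, hx, rfl, rfl⟩, rfl⟩
  · exact iff_of_false (stable_conj_ecPre _ _ s) (stable_ecPre _ s)

lemma fp_conj_ecPre_of_fp_ecPre_conj (hinj : (l.map Prod.fst).Nodup)
    (h : Fp (ecPre (l.map fun x => (x.1, conj x.2.1 x.2.2)))) :
    Fp (conj (ecPre (l.map fun x => (x.1, x.2.1))) (ecPre (l.map fun x => (x.1, x.2.2)))) := by
  have hinj' : ((l.map fun x => (x.1, conj x.2.1 x.2.2)).map Prod.fst).Nodup := by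
    simpa [List.map_map, Function.comp_def] using hinj
  obtain ⟨⟨a, u⟩, hu, hFu⟩ := exists_fp_of_fp_ecPre h
  -- `u` is the only `a`-successor, and it is inconsistent.
  refine Fp.conjSucc ((trans_conj_ecPre_iff hinj _ u).2 (trans_ecPre_iff.2 hu)) fun v hv => ?_
  rw [trans_conj_ecPre_iff hinj, trans_ecPre_iff] at hv
  rwa [eq_of_mem_of_nodup_map_fst hinj' hv hu]

end Injective

end

/-- With pairwise-distinct prefixes, the conjunction of external choices is
ready-simulated by the external choice of conjunctions. -/
theorem stmt11 {Act : Type} (l : List (Act × Proc Act × Proc Act))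
    (hinj : (l.map Prod.fst).Nodup) :
    rsLE (conj (ecPre (l.map fun x => (x.1, x.2.1)))
               (ecPre (l.map fun x => (x.1, x.2.2))))
         (ecPre (l.map fun x => (x.1, conj x.2.1 x.2.2))) :=
  rsLE_of_trans_iff (stable_conj_ecPre _ _) (fp_conj_ecPre_of_fp_ecPre_conj hinj)
    (trans_conj_ecPre_iff hinj)

end Proc
end

section
/- If t and s are in NF_B, then for every A ⊆ Act there exists r ∈ NF_B such that ⊢ t ∥_A s = r is derivable in AX_CLL. -/
open Classical

/-!
Both sides are finite disjunctions of injective external choices, and `∥_A` distributes over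
`∨` in both arguments, so it suffices to normalise `□ᵢ aᵢ.xᵢ ∥_A □ⱼ bⱼ.yⱼ`. The expansion law
turns it into an external choice of prefixed parallel compositions of smaller normal forms,
which have normal forms by induction on `NFB` in both arguments. Summands with the same prefix
are then merged with `a.x □ a.y = a.(x ∨ y)`, which restores injectivity in prefixes.
-/

namespace Proc

variable {Act : Type}

def DerivEq (p q : Proc Act) : Prop := Deriv p q ∧ Deriv q p

instance : HasEquiv (Proc Act) := ⟨DerivEq⟩

theorem Deriv.disj_le_of_le {p q r : Proc Act} (hp : Deriv p r) (hq : Deriv q r) :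
    Deriv (disj p q) r :=
  (Deriv.mono_disj hp hq).trans .disj_idem₁

theorem Deriv.le_disj_right {p q : Proc Act} : Deriv q (disj p q) :=
  Deriv.disj_le.trans .disj_comm

namespace DerivEq

variable {A : Set Act} {p p' q q' r : Proc Act}

@[refl] protected theorem refl (p : Proc Act) : p ≈ p := ⟨.refl p, .refl p⟩

protected theorem symm (h : p ≈ q) : q ≈ p := ⟨h.2, h.1⟩

protected theorem trans (h : p ≈ q) (h' : q ≈ r) : p ≈ r :=
  ⟨h.1.trans h'.1, h'.2.trans h.2⟩

instance : @_root_.Trans (Proc Act) (Proc Act) (Proc Act) (· ≈ ·) (· ≈ ·) (· ≈ ·) :=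
  ⟨DerivEq.trans⟩

theorem pre_congr (α : ActT Act) (h : p ≈ q) : pre α p ≈ pre α q :=
  ⟨.mono_pre h.1, .mono_pre h.2⟩

theorem ec_congr (h : p ≈ p') (h' : q ≈ q') : ec p q ≈ ec p' q' :=
  ⟨.mono_ec h.1 h'.1, .mono_ec h.2 h'.2⟩

theorem disj_congr (h : p ≈ p') (h' : q ≈ q') : disj p q ≈ disj p' q' :=
  ⟨.mono_disj h.1 h'.1, .mono_disj h.2 h'.2⟩

theorem par_congr (h : p ≈ p') (h' : q ≈ q') : par A p q ≈ par A p' q' :=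
  ⟨.mono_par h.1 h'.1, .mono_par h.2 h'.2⟩

theorem par_comm : par A p q ≈ par A q p := ⟨.par_comm, .par_comm⟩

theorem par_disj : par A p (disj q r) ≈ disj (par A p q) (par A p r) :=
  ⟨.ds_par, .disj_le_of_le (.mono_par (.refl p) .disj_le) (.mono_par (.refl p) .le_disj_right)⟩

theorem pre_disj (a : Act) (hp : Basic p) (hq : Basic q) :
    pre (.act a) (disj p q) ≈ ec (pre (.act a) p) (pre (.act a) q) :=
  ⟨.ds_pre hp hq,
    (Deriv.mono_ec (.mono_pre .disj_le) (.mono_pre .le_disj_right)).trans .ec_idem₁⟩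

end DerivEq

structure IsACOp (f : Proc Act → Proc Act → Proc Act) (e : Proc Act) : Prop where
  congr {a b c d : Proc Act} : a ≈ b → c ≈ d → f a c ≈ f b d
  assoc (a b c : Proc Act) : f (f a b) c ≈ f a (f b c)
  comm (a b : Proc Act) : f a b ≈ f b a
  unit (a : Proc Act) : f a e ≈ a

theorem isACOp_ec : IsACOp ec (nil : Proc Act) :=
  ⟨DerivEq.ec_congr, fun _ _ _ => ⟨.ec_assoc₁, .ec_assoc₂⟩, fun _ _ => ⟨.ec_comm, .ec_comm⟩,
    fun _ => ⟨.ec_nil₁, .ec_nil₂⟩⟩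

theorem isACOp_disj : IsACOp disj (bot : Proc Act) :=
  ⟨DerivEq.disj_congr, fun _ _ _ => ⟨.disj_assoc₂, .disj_assoc₁⟩,
    fun _ _ => ⟨.disj_comm, .disj_comm⟩, fun _ => ⟨.disj_bot₁, .disj_bot₂⟩⟩

/-- `ecList` and `djList` are definitionally `listFold ec nil` and `listFold disj bot`. -/
def listFold (f : Proc Act → Proc Act → Proc Act) (e : Proc Act) :
    List (Proc Act) → Proc Act
  | [] => e
  | t :: ts => ts.foldl f t

namespace IsACOp

variable {f : Proc Act → Proc Act → Proc Act} {e : Proc Act}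

theorem foldl_congr (h : IsACOp f e) :
    ∀ (l : List (Proc Act)) {a b : Proc Act}, a ≈ b → l.foldl f a ≈ l.foldl f b
  | [], _, _, hab => hab
  | _ :: l, _, _, hab => h.foldl_congr l (h.congr hab (.refl _))

theorem foldl_assoc (h : IsACOp f e) :
    ∀ (l : List (Proc Act)) (a b : Proc Act), l.foldl f (f a b) ≈ f a (l.foldl f b)
  | [], _, _ => .refl _
  | c :: l, a, b => (h.foldl_congr l (h.assoc a b c)).trans (h.foldl_assoc l a (f b c))

theorem fold_cons (h : IsACOp f e) (x : Proc Act) :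
    ∀ l : List (Proc Act), listFold f e (x :: l) ≈ f x (listFold f e l)
  | [] => (h.unit x).symm
  | y :: l => h.foldl_assoc l x y

theorem fold_append (h : IsACOp f e) :
    ∀ l₁ l₂ : List (Proc Act),
      listFold f e (l₁ ++ l₂) ≈ f (listFold f e l₁) (listFold f e l₂)
  | [], _ => ((h.comm _ _).trans (h.unit _)).symm
  | x :: l₁, l₂ => calc
      listFold f e (x :: (l₁ ++ l₂)) ≈ f x (f (listFold f e l₁) (listFold f e l₂)) :=
        (h.fold_cons x _).trans (h.congr (.refl x) (h.fold_append l₁ l₂))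
      _ ≈ f (listFold f e (x :: l₁)) (listFold f e l₂) :=
        (h.assoc _ _ _).symm.trans (h.congr (h.fold_cons x l₁).symm (.refl _))

theorem fold_perm (h : IsACOp f e) {l l' : List (Proc Act)} (hl : l.Perm l') :
    listFold f e l ≈ listFold f e l' := by
  induction hl with
  | nil => rfl
  | cons x _ ih =>
    exact (h.fold_cons x _).trans ((h.congr (.refl x) ih).trans (h.fold_cons x _).symm)
  | swap x y l => calc
      listFold f e (y :: x :: l) ≈ f (f y x) (listFold f e l) :=
        (h.fold_cons y _).trans
          ((h.congr (.refl y) (h.fold_cons x l)).trans (h.assoc _ _ _).symm)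
      _ ≈ listFold f e (x :: y :: l) :=
        (h.congr (h.comm y x) (.refl _)).trans ((h.assoc _ _ _).trans
          ((h.congr (.refl x) (h.fold_cons y l).symm).trans (h.fold_cons x _).symm))
  | trans _ _ ih₁ ih₂ => exact ih₁.trans ih₂

end IsACOp

theorem djList_append (l₁ l₂ : List (Proc Act)) :
    djList (l₁ ++ l₂) ≈ disj (djList l₁) (djList l₂) :=
  isACOp_disj.fold_append l₁ l₂

theorem par_djList (A : Set Act) (x : Proc Act) :
    ∀ l : List (Proc Act), par A x (djList l) ≈ djList (l.map (par A x))
  | [] => ⟨.par_bot₁, .par_bot₂⟩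
  | y :: l => calc
      par A x (djList (y :: l)) ≈ disj (par A x y) (par A x (djList l)) :=
        (DerivEq.par_congr (.refl x) (isACOp_disj.fold_cons y l)).trans DerivEq.par_disj
      _ ≈ djList ((y :: l).map (par A x)) :=
        (DerivEq.disj_congr (.refl _) (par_djList A x l)).trans
          (isACOp_disj.fold_cons _ _).symm

theorem ecPre_cons (a : Act) (p : Proc Act) (L : List (Act × Proc Act)) :
    ecPre ((a, p) :: L) ≈ ec (pre (.act a) p) (ecPre L) :=
  isACOp_ec.fold_cons _ _

theorem ecPre_append (L₁ L₂ : List (Act × Proc Act)) :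
    ecPre (L₁ ++ L₂) ≈ ec (ecPre L₁) (ecPre L₂) := by
  rw [ecPre, List.map_append]
  exact isACOp_ec.fold_append _ _

theorem ecPre_perm {L L' : List (Act × Proc Act)} (h : L.Perm L') : ecPre L ≈ ecPre L' :=
  isACOp_ec.fold_perm (h.map _)

theorem basic_foldl {f : Proc Act → Proc Act → Proc Act}
    (hf : ∀ {p q : Proc Act}, Basic p → Basic q → Basic (f p q)) :
    ∀ {l : List (Proc Act)} {z : Proc Act},
      Basic z → (∀ x ∈ l, Basic x) → Basic (l.foldl f z)
  | [], _, hz, _ => hz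
  | x :: l, _, hz, hl =>
    basic_foldl (l := l) hf (hf hz (hl x List.mem_cons_self)) fun y hy =>
      hl y (List.mem_cons_of_mem x hy)

theorem basic_ecPre {L : List (Act × Proc Act)} (h : ∀ x ∈ L, Basic x.2) :
    Basic (ecPre L) := by
  cases L with
  | nil => exact .nil
  | cons x L =>
    refine basic_foldl .ec (.pre (h x List.mem_cons_self)) fun y hy => ?_
    obtain ⟨z, hz, rfl⟩ := List.mem_map.mp hy
    exact .pre (h z (List.mem_cons_of_mem _ hz))

theorem NFB.basic {p : Proc Act} (hp : NFB p) : Basic p := by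
  induction hp with
  | mk ls hne _ _ ih =>
    obtain ⟨l, ls, rfl⟩ := List.exists_cons_of_ne_nil hne
    refine basic_foldl .disj (basic_ecPre (ih l List.mem_cons_self)) fun y hy => ?_
    obtain ⟨l', hl', rfl⟩ := List.mem_map.mp hy
    exact basic_ecPre (ih l' (List.mem_cons_of_mem _ hl'))

theorem nfb_ecPre {L : List (Act × Proc Act)} (hnd : (L.map Prod.fst).Nodup)
    (hL : ∀ x ∈ L, NFB x.2) : NFB (ecPre L) :=
  NFB.mk [L] (List.cons_ne_nil _ _) (by simpa using hnd) (by simpa using hL)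

def HasNF (p : Proc Act) : Prop := ∃ r, NFB r ∧ p ≈ r

namespace HasNF

variable {p q : Proc Act}

theorem of_nfb (hp : NFB p) : HasNF p := ⟨p, hp, .refl p⟩

theorem of_derivEq (h : p ≈ q) (hq : HasNF q) : HasNF p :=
  let ⟨r, hr, hqr⟩ := hq; ⟨r, hr, h.trans hqr⟩

theorem disj (hp : HasNF p) (hq : HasNF q) : HasNF (disj p q) := by
  obtain ⟨_, ⟨ls₁, hne₁, hnd₁, hsub₁⟩, hp⟩ := hp
  obtain ⟨_, ⟨ls₂, _, hnd₂, hsub₂⟩, hq⟩ := hq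
  refine ⟨djList ((ls₁ ++ ls₂).map ecPre), NFB.mk _ (by simp [hne₁]) ?_ ?_, ?_⟩
  · simpa only [List.mem_append, or_imp, forall_and] using ⟨hnd₁, hnd₂⟩
  · simpa only [List.mem_append, or_imp, forall_and] using ⟨hsub₁, hsub₂⟩
  · rw [List.map_append]
    exact (DerivEq.disj_congr hp hq).trans (djList_append _ _).symm

end HasNF

theorem hasNF_djList :
    ∀ {l : List (Proc Act)}, l ≠ [] → (∀ x ∈ l, HasNF x) → HasNF (djList l)
  | [x], _, h => h x List.mem_cons_self
  | x :: y :: l, _, h =>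
    .of_derivEq (isACOp_disj.fold_cons x (y :: l))
      (.disj (h x List.mem_cons_self)
        (hasNF_djList (List.cons_ne_nil y l) fun z hz => h z (List.mem_cons_of_mem _ hz)))

theorem hasNF_par_djList {A : Set Act} {t : Proc Act} {l : List (Proc Act)} (hl : l ≠ [])
    (h : ∀ s ∈ l, HasNF (par A t s)) : HasNF (par A t (djList l)) :=
  .of_derivEq (par_djList A t l) <| hasNF_djList (by simpa using hl) (by simpa using h)

theorem hasNF_djList_par {A : Set Act} {s : Proc Act} {l : List (Proc Act)} (hl : l ≠ [])
    (h : ∀ t ∈ l, HasNF (par A t s)) : HasNF (par A (djList l) s) :=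
  .of_derivEq DerivEq.par_comm <|
    hasNF_par_djList hl fun t ht => .of_derivEq DerivEq.par_comm (h t ht)

theorem exists_injective_ecPre_cons (a : Act) {p : Proc Act} (hp : NFB p)
    {L : List (Act × Proc Act)} (hnd : (L.map Prod.fst).Nodup) (hL : ∀ x ∈ L, NFB x.2) :
    ∃ L', (L'.map Prod.fst).Nodup ∧ (∀ x ∈ L', NFB x.2) ∧
      ecPre ((a, p) :: L) ≈ ecPre L' := by
  by_cases ha : a ∈ L.map Prod.fst
  · obtain ⟨q, hq⟩ : ∃ q, (a, q) ∈ L := by simpa using ha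
    set R := L.erase (a, q)
    have hperm : L.Perm ((a, q) :: R) := List.perm_cons_erase hq
    have hndR : a ∉ R.map Prod.fst ∧ (R.map Prod.fst).Nodup := by
      simpa using (hperm.map Prod.fst).nodup_iff.mp hnd
    obtain ⟨r, hr, hpq⟩ := (HasNF.of_nfb hp).disj (.of_nfb (hL _ hq))
    refine ⟨(a, r) :: R, by simpa using hndR, ?_, ?_⟩
    · simpa [hr] using fun x hx => hL x (List.mem_of_mem_erase hx)
    · calc
        ecPre ((a, p) :: L) ≈ ec (pre (.act a) p) (ec (pre (.act a) q) (ecPre R)) :=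
          (ecPre_perm (hperm.cons _)).trans ((ecPre_cons a p _).trans
            (DerivEq.ec_congr (.refl _) (ecPre_cons a q R)))
        _ ≈ ec (pre (.act a) (disj p q)) (ecPre R) :=
          (isACOp_ec.assoc _ _ _).symm.trans (DerivEq.ec_congr
            (DerivEq.pre_disj a hp.basic (hL _ hq).basic).symm (.refl _))
        _ ≈ ecPre ((a, r) :: R) :=
          (DerivEq.ec_congr (DerivEq.pre_congr _ hpq) (.refl _)).trans (ecPre_cons a r R).symm
  · exact ⟨(a, p) :: L, by simpa [ha] using hnd, by simpa [hp] using hL, .refl _⟩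

theorem exists_injective_ecPre :
    ∀ {L : List (Act × Proc Act)}, (∀ x ∈ L, HasNF x.2) →
      ∃ L', (L'.map Prod.fst).Nodup ∧ (∀ x ∈ L', NFB x.2) ∧ ecPre L ≈ ecPre L'
  | [], _ => ⟨[], List.nodup_nil, by simp, .refl _⟩
  | (a, p) :: L, h => by
    obtain ⟨r, hr, hpr⟩ := h (a, p) List.mem_cons_self
    obtain ⟨L', hnd', hL', hLL'⟩ :=
      exists_injective_ecPre fun x hx => h x (List.mem_cons_of_mem _ hx)
    obtain ⟨L'', hnd'', hL'', hL'L''⟩ := exists_injective_ecPre_cons a hr hnd' hL'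
    refine ⟨L'', hnd'', hL'', ?_⟩
    calc
      ecPre ((a, p) :: L) ≈ ec (pre (.act a) r) (ecPre L') :=
        (ecPre_cons a p L).trans (DerivEq.ec_congr (DerivEq.pre_congr _ hpr) hLL')
      _ ≈ ecPre L'' := (ecPre_cons a r L').symm.trans hL'L''

theorem hasNF_ecPre {L : List (Act × Proc Act)} (h : ∀ x ∈ L, HasNF x.2) :
    HasNF (ecPre L) :=
  let ⟨L', hnd, hL', hLL'⟩ := exists_injective_ecPre h
  ⟨ecPre L', nfb_ecPre hnd hL', hLL'⟩

theorem expTerm_eq (A : Set Act) (l₁ l₂ : List (Act × Proc Act)) :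
    expTerm A l₁ l₂ = ec (ec
      (ecPre ((l₁.filter fun x => decide (x.1 ∉ A)).map fun x => (x.1, par A x.2 (ecPre l₂))))
      (ecPre ((l₂.filter fun y => decide (y.1 ∉ A)).map fun y => (y.1, par A (ecPre l₁) y.2))))
      (ecPre (l₁.flatMap fun x => (l₂.filter fun y => decide (y.1 = x.1 ∧ x.1 ∈ A)).map
        fun y => (x.1, par A x.2 y.2))) := by
  simp only [expTerm, ecPre, List.map_map, List.map_flatMap, Function.comp_def]

theorem hasNF_par_ecPre {A : Set Act} {l₁ l₂ : List (Act × Proc Act)}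
    (hb₁ : ∀ x ∈ l₁, Basic x.2) (hb₂ : ∀ y ∈ l₂, Basic y.2)
    (h₁ : ∀ x ∈ l₁, HasNF (par A x.2 (ecPre l₂))) (h₂ : ∀ y ∈ l₂, HasNF (par A (ecPre l₁) y.2))
    (h₁₂ : ∀ x ∈ l₁, ∀ y ∈ l₂, HasNF (par A x.2 y.2)) :
    HasNF (par A (ecPre l₁) (ecPre l₂)) := by
  refine .of_derivEq ⟨.exp1 A l₁ l₂, .exp2 A l₁ l₂ hb₁ hb₂⟩ ?_
  rw [expTerm_eq]
  refine .of_derivEq ((DerivEq.ec_congr (ecPre_append _ _).symm (.refl _)).trans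
    (ecPre_append _ _).symm) (hasNF_ecPre ?_)
  simp only [List.mem_append, List.mem_map, List.mem_filter, List.mem_flatMap]
  rintro _ ((⟨x, ⟨hx, -⟩, rfl⟩ | ⟨y, ⟨hy, -⟩, rfl⟩) | ⟨x, hx, y, ⟨hy, -⟩, rfl⟩)
  exacts [h₁ x hx, h₂ y hy, h₁₂ x hx y hy]

theorem hasNF_par {A : Set Act} {t s : Proc Act} (ht : NFB t) (hs : NFB s) :
    HasNF (par A t s) := by
  induction ht generalizing s with
  | mk ls₁ hne₁ _ hsub₁ ih₁ =>
    refine hasNF_djList_par (by simpa using hne₁) ?_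
    simp only [List.mem_map]
    rintro _ ⟨l₁, hl₁, rfl⟩
    induction hs with
    | mk ls₂ hne₂ hnd₂ hsub₂ ih₂ =>
      refine hasNF_par_djList (by simpa using hne₂) ?_
      simp only [List.mem_map]
      rintro _ ⟨l₂, hl₂, rfl⟩
      exact hasNF_par_ecPre (fun x hx => (hsub₁ l₁ hl₁ x hx).basic)
        (fun y hy => (hsub₂ l₂ hl₂ y hy).basic)
        (fun x hx => ih₁ l₁ hl₁ x hx (nfb_ecPre (hnd₂ l₂ hl₂) (hsub₂ l₂ hl₂)))
        (fun y hy => ih₂ l₂ hl₂ y hy)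
        (fun x hx y hy => ih₁ l₁ hl₁ x hx (hsub₂ l₂ hl₂ y hy))

/-- Parallel compositions of normal forms reduce in AX_CLL to a normal form in NF_B. -/
theorem stmt16 {Act : Type} (t s : Proc Act) (ht : NFB t) (hs : NFB s) (A : Set Act) :
    ∃ r : Proc Act, NFB r ∧ Deriv (par A t s) r ∧ Deriv r (par A t s) :=
  let ⟨r, hr, h⟩ := hasNF_par (A := A) ht hs
  ⟨r, hr, h.1, h.2⟩

end Proc
end
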